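/- arXiv:2006.15322 — 7 statements merged into one kernel-verified Lean document; each statement's English description precedes it below -/
import Mathlib

section
/- Let f : ℝ² → ℝ² be defined by f₁(x₁,x₂) = log(x₁ + √(x₁² + e^{−2x₂})) + x₂ and f₂(x₁,x₂) = √(x₁² + e^{−2x₂}). Then f is differentiable on all of ℝ², its Jacobian determinant is identically equal to −1, and its curl ∂f₂/∂x₁ − ∂f₁/∂x₂ is identically zero. -/
open Real

noncomputable def pd1 (g : ℝ × ℝ → ℝ) (p : ℝ × ℝ) : ℝ := deriv (fun t => g (t, p.2)) p.1

noncomputable def pd2 (g : ℝ × ℝ → ℝ) (p : ℝ × ℝ) : ℝ := deriv (fun t => g (p.1, t)) p.2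

noncomputable def jacDet (f : ℝ × ℝ → ℝ × ℝ) (p : ℝ × ℝ) : ℝ :=
  pd1 (fun q => (f q).1) p * pd2 (fun q => (f q).2) p
    - pd2 (fun q => (f q).1) p * pd1 (fun q => (f q).2) p

noncomputable def curl (f : ℝ × ℝ → ℝ × ℝ) (p : ℝ × ℝ) : ℝ :=
  pd1 (fun q => (f q).2) p - pd2 (fun q => (f q).1) p

/-! With `s = √(x² + e^{-2y}) > |x|`, the logarithm is defined, `∂ₓ s = x / s`,
`∂ₓ log (x + s) = 1 / s` and `∂_y s = -e^{-2y} / s`. Since `(x + s)(s - x) = e^{-2y}`,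
`∂_y (log (x + s) + y) = x / s`. Hence the Jacobian determinant is `-(e^{-2y} + x²) / s² = -1`,
and both terms of the curl equal `x / s`. -/

section
variable {c : ℝ}

lemma sqrt_sq_add_pos (x : ℝ) (hc : 0 < c) : 0 < √(x ^ 2 + c) :=
  Real.sqrt_pos.2 (by positivity)

lemma add_sqrt_sq_add_pos (x : ℝ) (hc : 0 < c) : 0 < x + √(x ^ 2 + c) := by
  have hx : |x| < √(x ^ 2 + c) := by
    rw [← Real.sqrt_sq_eq_abs]
    exact Real.sqrt_lt_sqrt (sq_nonneg x) (by linarith)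
  linarith [neg_abs_le x]

lemma hasDerivAt_sqrt_sq_add (hc : 0 < c) (x : ℝ) :
    HasDerivAt (fun t => √(t ^ 2 + c)) (x / √(x ^ 2 + c)) x := by
  have h := ((hasDerivAt_pow 2 x).add_const c).sqrt (by positivity)
  convert h using 1
  field_simp
  push_cast
  ring

lemma hasDerivAt_log_add_sqrt_sq_add (hc : 0 < c) (x : ℝ) :
    HasDerivAt (fun t => log (t + √(t ^ 2 + c))) (1 / √(x ^ 2 + c)) x := by
  have h : HasDerivAt (fun t => t + √(t ^ 2 + c)) (1 + x / √(x ^ 2 + c)) x :=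
    (hasDerivAt_id' x).add (hasDerivAt_sqrt_sq_add hc x)
  have hs := (sqrt_sq_add_pos x hc).ne'
  have hxs := (add_sqrt_sq_add_pos x hc).ne'
  refine (h.log hxs).congr_deriv ?_
  field_simp
  ring

end

lemma hasDerivAt_sqrt_sq_add_exp (x y : ℝ) :
    HasDerivAt (fun t => √(x ^ 2 + exp (-2 * t)))
      (-exp (-2 * y) / √(x ^ 2 + exp (-2 * y))) y := by
  have h := ((((hasDerivAt_id' y).const_mul (-2)).exp).const_add (x ^ 2)).sqrt
    (by positivity)
  convert h using 1
  field_simp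

lemma hasDerivAt_log_add_sqrt_sq_add_exp_add (x y : ℝ) :
    HasDerivAt (fun t => log (x + √(x ^ 2 + exp (-2 * t))) + t)
      (x / √(x ^ 2 + exp (-2 * y))) y := by
  have hpos := exp_pos (-2 * y)
  have h : HasDerivAt (fun t => log (x + √(x ^ 2 + exp (-2 * t))))
      (-exp (-2 * y) / √(x ^ 2 + exp (-2 * y)) / (x + √(x ^ 2 + exp (-2 * y)))) y :=
    ((hasDerivAt_sqrt_sq_add_exp x y).const_add x).log (add_sqrt_sq_add_pos x hpos).ne'
  have hs := (sqrt_sq_add_pos x hpos).ne'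
  have hxs := (add_sqrt_sq_add_pos x hpos).ne'
  have hsq := Real.sq_sqrt (by positivity : 0 ≤ x ^ 2 + exp (-2 * y))
  refine (h.add (hasDerivAt_id' y)).congr_deriv ?_
  set E := exp (-2 * y)
  field_simp
  linear_combination hsq

theorem stmt4 :
    let f : ℝ × ℝ → ℝ × ℝ := fun p =>
      (Real.log (p.1 + Real.sqrt (p.1 ^ 2 + Real.exp (-2 * p.2))) + p.2,
        Real.sqrt (p.1 ^ 2 + Real.exp (-2 * p.2)))
    Differentiable ℝ f ∧ (∀ p : ℝ × ℝ, jacDet f p = -1) ∧ ∀ p : ℝ × ℝ, curl f p = 0 := by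
  intro f
  refine ⟨?_, ?_, ?_⟩
  · fun_prop (disch := first
      | (intro p; positivity)
      | exact fun p => (add_sqrt_sq_add_pos _ (exp_pos _)).ne')
  · rintro ⟨x, y⟩
    have hpos := exp_pos (-2 * y)
    have hs := (sqrt_sq_add_pos x hpos).ne'
    have hsq := Real.sq_sqrt (by positivity : 0 ≤ x ^ 2 + exp (-2 * y))
    rw [jacDet, pd1, pd2, pd1, pd2, ((hasDerivAt_log_add_sqrt_sq_add hpos x).add_const y).deriv,
      (hasDerivAt_sqrt_sq_add_exp x y).deriv, (hasDerivAt_log_add_sqrt_sq_add_exp_add x y).deriv,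
      (hasDerivAt_sqrt_sq_add hpos x).deriv]
    set E := exp (-2 * y)
    field_simp
    linear_combination hsq
  · rintro ⟨x, y⟩
    rw [curl, pd1, pd2, (hasDerivAt_sqrt_sq_add (exp_pos (-2 * y)) x).deriv,
      (hasDerivAt_log_add_sqrt_sq_add_exp_add x y).deriv, sub_self]
end

section
/- Let f : ℝ² → ℝ² be defined by f₁(x₁,x₂) = log(x₁ + √(x₁² + e^{−2x₂})) + x₂ and f₂(x₁,x₂) = √(x₁² + e^{−2x₂}). Then the image f(ℝ²) equals the open half-plane {(u,v) ∈ ℝ² : v > 0}. -/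
open Real

theorem stmt5 :
    let f : ℝ × ℝ → ℝ × ℝ := fun p =>
      (Real.log (p.1 + Real.sqrt (p.1 ^ 2 + Real.exp (-2 * p.2))) + p.2,
        Real.sqrt (p.1 ^ 2 + Real.exp (-2 * p.2)))
    Set.range f = {q : ℝ × ℝ | 0 < q.2} := by
  intro f
  ext q
  simp only [Set.mem_range, Set.mem_setOf_eq]
  constructor
  · rintro ⟨p, rfl⟩
    exact Real.sqrt_pos.mpr (by positivity)
  · intro hv
    obtain ⟨u, v⟩ := q
    simp only at hv ⊢
    have hexp : (0:ℝ) < Real.exp (-2 * u) := Real.exp_pos _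
    set t := 2 * v / (1 + Real.exp (-2 * u)) with ht
    have ht0 : 0 < t := by positivity
    have hte : t * (1 + Real.exp (-2 * u)) = 2 * v := by
      rw [ht]; field_simp
    refine ⟨(t - v, u - Real.log t), ?_⟩
    have hx2 : Real.exp (-2 * (u - Real.log t)) = Real.exp (-2 * u) * t ^ 2 := by
      rw [show -2 * (u - Real.log t) = -2 * u + 2 * Real.log t by ring, Real.exp_add]
      congr 1
      rw [show (2:ℝ) * Real.log t = Real.log (t ^ 2) by
        rw [Real.log_pow]; push_cast; ring]
      exact Real.exp_log (by positivity)
    have hkey : (t - v) ^ 2 + Real.exp (-2 * u) * t ^ 2 = v ^ 2 := by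
      nlinarith [hte]
    have hsqrt : Real.sqrt ((t - v) ^ 2 + Real.exp (-2 * (u - Real.log t))) = v := by
      rw [hx2, hkey, Real.sqrt_sq hv.le]
    show (Real.log ((t - v) + Real.sqrt ((t - v) ^ 2 + Real.exp (-2 * (u - Real.log t)))) + (u - Real.log t),
        Real.sqrt ((t - v) ^ 2 + Real.exp (-2 * (u - Real.log t)))) = (u, v)
    rw [hsqrt]
    simp only [Prod.mk.injEq]
    constructor
    · rw [show t - v + v = t by ring]; ring
    · trivial
end

section
/- Let n ≥ 1, α > 0, and let f : ℝⁿ → ℝⁿ be continuous, locally injective, and α-covering at each point x ∈ ℝⁿ (meaning: for every x and every ε > 0 there exists r ∈ (0, ε] such that the ball B(f(x), αr) is contained in f(B(x, r))). Then f is a global homeomorphism of ℝⁿ onto ℝⁿ and f⁻¹ is Lipschitz continuous with constant α⁻¹. -/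
/-!
Covering at every point makes `f` open, and an Ekeland-type minimisation shows that every `w` has
a preimage `z` with `α * dist z x ≤ dist w (f x)`: a minimiser `z` of `dist (f z) w` over the
compact set `{z | α * dist z x + dist (f z) w ≤ dist (f x) w}` with `f z ≠ w` could be improved
by covering at `z` along the segment towards `w`. With local injectivity this makes `f` a local
homeomorphism that expands distances by the factor `α` near each point. Lifts of `K`-Lipschitz
paths are then `K / α`-Lipschitz, so partial lifts stay in a compact ball and can always be
continued: every Lipschitz path lifts. Lifting the segments issued from `f x₀` and applying the
homotopy lifting argument gives a continuous section `g` of `f` with `g (f x₀) = x₀`; as `g ∘ f`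
and `id` both lift `f` and agree at `x₀`, `g` is the inverse of `f`, and the preimage estimate
makes it `α⁻¹`-Lipschitz.
-/

open Set Metric Function Filter Topology

variable {X F : Type*}

def IsPointwiseCovering [PseudoMetricSpace X] [PseudoMetricSpace F] (α : ℝ) (f : X → F) : Prop :=
  ∀ x, ∀ ε : ℝ, 0 < ε → ∃ r : ℝ, 0 < r ∧ r ≤ ε ∧ closedBall (f x) (α * r) ⊆ f '' closedBall x r

namespace IsPointwiseCovering

variable [PseudoMetricSpace X] {α : ℝ}

theorem isOpenMap [PseudoMetricSpace F] {f : X → F} (hcov : IsPointwiseCovering α f) (hα : 0 < α) :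
    IsOpenMap f := by
  refine fun U hU ↦ isOpen_iff.mpr ?_
  rintro _ ⟨x, hxU, rfl⟩
  obtain ⟨ε, hε, hεU⟩ := nhds_basis_closedBall.mem_iff.mp (hU.mem_nhds hxU)
  obtain ⟨r, hr, hrε, hball⟩ := hcov x ε hε
  exact ⟨α * r, by positivity, ball_subset_closedBall.trans <| hball.trans <|
    image_mono <| (closedBall_subset_closedBall hrε).trans hεU⟩

variable [NormedAddCommGroup F] [NormedSpace ℝ F] [ProperSpace X] {f : X → F}

theorem exists_preimage_mul_dist_le (hcov : IsPointwiseCovering α f) (hα : 0 < α)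
    (hf : Continuous f) (x : X) (w : F) : ∃ z, f z = w ∧ α * dist z x ≤ dist w (f x) := by
  set C := {z | α * dist z x + dist (f z) w ≤ dist (f x) w}
  have hxC : x ∈ C := by simp [C]
  have hC : IsCompact C := by
    refine (isCompact_closedBall x (dist (f x) w / α)).of_isClosed_subset
      (isClosed_le (by fun_prop) continuous_const) fun z hz ↦ ?_
    rw [mem_closedBall, le_div_iff₀' hα]
    linarith [dist_nonneg (x := f z) (y := w), hz.out]
  obtain ⟨z, hzC, hmin⟩ :=
    hC.exists_isMinOn ⟨x, hxC⟩ (by fun_prop : Continuous fun z ↦ dist (f z) w).continuousOn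
  set m := dist (f z) w
  rcases (dist_nonneg : 0 ≤ m).eq_or_lt with hm | hm
  · exact ⟨z, dist_eq_zero.mp hm.symm, by rw [dist_comm w]; linarith [hzC.out]⟩
  obtain ⟨r, hr, hrm, hball⟩ := hcov z (m / α) (by positivity)
  have hαr : α * r ≤ m := by rwa [le_div_iff₀' hα] at hrm
  have hc : α * r / m ≤ 1 := (div_le_one hm).mpr hαr
  have hy : AffineMap.lineMap (f z) w (α * r / m) ∈ closedBall (f z) (α * r) := by
    rw [mem_closedBall, dist_lineMap_left, Real.norm_of_nonneg (by positivity)]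
    exact (div_mul_cancel₀ _ hm.ne').le
  obtain ⟨z', hz', hfz'⟩ := hball hy
  have hdist : dist (f z') w = m - α * r := by
    rw [hfz', dist_lineMap_right, Real.norm_of_nonneg (by linarith), sub_mul,
      div_mul_cancel₀ _ hm.ne', one_mul]
  have hz'C : z' ∈ C := by
    simp only [C, mem_ofPred_eq, hdist]
    nlinarith [hzC.out, dist_triangle z' z x, mem_closedBall.mp hz']
  have hle : m ≤ dist (f z') w := hmin hz'C
  linarith [mul_pos hα hr]

theorem eventually_mul_dist_le
    (hcov : IsPointwiseCovering α f) (hα : 0 < α) (hf : Continuous f)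
    (hinj : IsLocallyInjective f) (x : X) :
    ∀ᶠ y in 𝓝 x, α * dist y x ≤ dist (f y) (f x) := by
  obtain ⟨U, hU, hxU, hUinj⟩ := hinj x
  obtain ⟨ρ, hρ, hρU⟩ := isOpen_iff.mp hU x hxU
  filter_upwards [ball_mem_nhds x (half_pos hρ),
    hf.continuousAt (ball_mem_nhds (f x) (by positivity : 0 < α * (ρ / 2)))] with y hy hfy
  obtain ⟨z, hfz, hzy⟩ := hcov.exists_preimage_mul_dist_le hα hf y (f x)
  have hzy' : dist z y < ρ / 2 :=
    lt_of_mul_lt_mul_left (hzy.trans_lt (by rw [dist_comm]; exact mem_ball.mp hfy)) hα.le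
  have hzx : z ∈ ball x ρ := by
    rw [mem_ball]; linarith [dist_triangle z y x, mem_ball.mp hy]
  rw [hUinj (hρU hzx) hxU hfz] at hzy
  rwa [dist_comm, dist_comm (f y)]

end IsPointwiseCovering

theorem IsLocallyInjective.isLocalHomeomorph [TopologicalSpace X] [TopologicalSpace F]
    {f : X → F} (hinj : IsLocallyInjective f) (hcont : Continuous f)
    (hopen : IsOpenMap f) : IsLocalHomeomorph f := by
  refine isLocalHomeomorph_iff_isOpenEmbedding_restrict.mpr fun x ↦ ?_
  obtain ⟨U, hU, hxU, hUinj⟩ := hinj x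
  exact ⟨U, hU.mem_nhds hxU, .of_continuous_injective_isOpenMap
    (hcont.comp continuous_subtype_val) hUinj.injective (hopen.comp hU.isOpenMap_subtype_val)⟩

section PathLifting

variable {f : X → F} {γ : ℝ → F} {Γ : ℝ → X}

theorem mul_dist_lift_le [PseudoMetricSpace X] [PseudoMetricSpace F] {α : ℝ}
    (hα : 0 ≤ α) (hexp : ∀ x, ∀ᶠ y in 𝓝 x, α * dist y x ≤ dist (f y) (f x)) {K : NNReal}
    (hγ : LipschitzWith K γ) {a b : ℝ} (hΓ : ContinuousOn Γ (Icc a b))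
    (hlift : EqOn (f ∘ Γ) γ (Icc a b)) {t : ℝ} (ht : t ∈ Icc a b) :
    α * dist (Γ t) (Γ a) ≤ K * (t - a) := by
  refine image_le_of_liminf_slope_right_le_deriv_boundary (f := fun t ↦ α * dist (Γ t) (Γ a))
    (B := fun t ↦ K * (t - a)) (B' := fun _ ↦ (K : ℝ)) (by fun_prop) (by simp) (by fun_prop)
    (fun s _ ↦ by simpa using ((hasDerivAt_id s).sub_const a).const_mul (K : ℝ) |>.hasDerivWithinAt)
    (fun s hs r hr ↦ ?_) ht
  have hΓs : Tendsto Γ (𝓝[>] s) (𝓝 (Γ s)) := by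
    rw [← nhdsWithin_Ioo_eq_nhdsGT hs.2]
    exact (hΓ s (Ico_subset_Icc_self hs)).mono fun z hz ↦ ⟨hs.1.trans hz.1.le, hz.2.le⟩
  refine Eventually.frequently ?_
  filter_upwards [hΓs (hexp (Γ s)), Ioo_mem_nhdsGT hs.2] with z hz hzs
  have hz_mem : z ∈ Icc a b := ⟨hs.1.trans hzs.1.le, hzs.2.le⟩
  rw [slope_def_field, div_lt_iff₀ (sub_pos.2 hzs.1)]
  calc α * dist (Γ z) (Γ a) - α * dist (Γ s) (Γ a) ≤ α * dist (Γ z) (Γ s) := by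
        nlinarith [dist_triangle (Γ z) (Γ s) (Γ a)]
    _ ≤ dist (f (Γ z)) (f (Γ s)) := hz
    _ = dist (γ z) (γ s) := by rw [← hlift hz_mem, ← hlift (Ico_subset_Icc_self hs)]; rfl
    _ ≤ K * dist z s := hγ.dist_le_mul z s
    _ = K * (z - s) := by rw [Real.dist_eq, abs_of_pos (sub_pos.2 hzs.1)]
    _ < r * (z - s) := mul_lt_mul_of_pos_right hr (sub_pos.2 hzs.1)

theorem exists_lift_Icc_extend [TopologicalSpace X] [TopologicalSpace F] (hγ : Continuous γ)
    {s T : ℝ} (hs : 0 ≤ s) (hsT : s ≤ T) (hΓ : ContinuousOn Γ (Icc 0 s))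
    (hlift : EqOn (f ∘ Γ) γ (Icc 0 s)) (e : OpenPartialHomeomorph X F) (hfe : EqOn f e e.source)
    (hΓe : Γ s ∈ e.source) (hγe : MapsTo γ (Icc s T) e.target) :
    ∃ Γ' : ℝ → X, Γ' 0 = Γ 0 ∧ ContinuousOn Γ' (Icc 0 T) ∧ EqOn (f ∘ Γ') γ (Icc 0 T) := by
  have hΓs : e.symm (γ s) = Γ s := by
    rw [← hlift ⟨hs, le_rfl⟩, comp_apply, hfe hΓe, e.left_inv hΓe]
  refine ⟨fun t ↦ if t ≤ s then Γ t else e.symm (γ t), if_pos hs, ?_, fun t ht ↦ ?_⟩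
  · rw [← Icc_union_Icc_eq_Icc hs hsT]
    refine ContinuousOn.union_of_isClosed (hΓ.congr fun t ht ↦ if_pos ht.2)
      ((e.continuousOn_symm.comp hγ.continuousOn hγe).congr fun t ht ↦ ?_) isClosed_Icc isClosed_Icc
    split_ifs with hts
    · rw [le_antisymm hts ht.1]; exact hΓs.symm
    · rfl
  · dsimp only [comp_apply]
    split_ifs with hts
    · exact hlift ⟨ht.1, hts⟩
    · have hγt := hγe ⟨(not_le.mp hts).le, ht.2⟩
      rw [hfe (e.map_target hγt), e.right_inv hγt]

theorem exists_lift_Icc_of_lipschitzWith [MetricSpace X] [ProperSpace X] [MetricSpace F]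
    (hf : IsLocalHomeomorph f) {α : ℝ} (hα : 0 < α)
    (hexp : ∀ x, ∀ᶠ y in 𝓝 x, α * dist y x ≤ dist (f y) (f x)) {K : NNReal}
    (hγ : LipschitzWith K γ) {x : X} (hx : f x = γ 0) (T : ℝ) :
    ∃ Γ : ℝ → X, Γ 0 = x ∧ ContinuousOn Γ (Icc 0 T) ∧ EqOn (f ∘ Γ) γ (Icc 0 T) := by
  set P : ℝ → Prop := fun T ↦
    ∃ Γ : ℝ → X, Γ 0 = x ∧ ContinuousOn Γ (Icc 0 T) ∧ EqOn (f ∘ Γ) γ (Icc 0 T)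
  have hP_anti : ∀ {s t}, s ≤ t → P t → P s := fun hst ⟨Γ, hΓ0, hΓc, hΓl⟩ ↦
    ⟨Γ, hΓ0, hΓc.mono (Icc_subset_Icc_right hst), hΓl.mono (Icc_subset_Icc_right hst)⟩
  by_contra hT
  set S := {t | 0 ≤ t ∧ P t}
  have h0S : (0 : ℝ) ∈ S := ⟨le_rfl, fun _ ↦ x, rfl, continuousOn_const, fun t ht ↦ by
    rw [Icc_self, mem_singleton_iff] at ht; rw [ht]; exact hx⟩
  have hS_bdd : BddAbove S := ⟨T, fun t ht ↦ le_of_not_ge fun htT ↦ hT (hP_anti htT ht.2)⟩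
  set m := sSup S
  have hS_le : ∀ t ∈ S, t ≤ m := fun t ht ↦ le_csSup hS_bdd ht
  have : Nonempty X := ⟨x⟩
  choose! Γ hΓ0 hΓc hΓl using fun t (ht : t ∈ S) ↦ ht.2
  have : (𝓝[S] m).NeBot := mem_closure_iff_nhdsWithin_neBot.mp (csSup_mem_closure ⟨0, h0S⟩ hS_bdd)
  -- the endpoints `Γ t t` of the partial lifts stay in a compact ball, so they cluster at some `L`
  have hbound : ∀ t ∈ S, Γ t t ∈ closedBall x (K * m / α) := fun t ht ↦ by
    have := mul_dist_lift_le hα.le hexp hγ (hΓc t ht) (hΓl t ht) ⟨ht.1, le_rfl⟩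
    rw [hΓ0 t ht, sub_zero] at this
    rw [mem_closedBall, le_div_iff₀' hα]
    exact this.trans (mul_le_mul_of_nonneg_left (hS_le t ht) K.2)
  obtain ⟨L, -, hL⟩ := (isCompact_closedBall x (K * m / α)).exists_clusterPt
    (f := map (fun t ↦ Γ t t) (𝓝[S] m))
    (le_principal_iff.mpr (mem_map.mpr (mem_of_superset self_mem_nhdsWithin hbound)))
  have hfL : f L = γ m := by
    have h₁ : MapClusterPt (f L) (𝓝[S] m) (f ∘ fun t ↦ Γ t t) :=
      MapClusterPt.tendsto_comp (hf.continuous.tendsto L) hL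
    have h₂ : Tendsto (f ∘ fun t ↦ Γ t t) (𝓝[S] m) (𝓝 (γ m)) :=
      (hγ.continuous.continuousWithinAt (s := S)).congr' <|
        eventually_nhdsWithin_of_forall fun t ht ↦ (hΓl t ht ⟨ht.1, le_rfl⟩).symm
    exact eq_of_nhds_neBot (h₁.clusterPt.mono h₂).neBot
  obtain ⟨e, hLe, hfe⟩ := hf L
  obtain ⟨δ, hδ, hδe⟩ : ∃ δ > 0, MapsTo γ (Icc (m - δ) (m + δ)) e.target := by
    have : γ ⁻¹' e.target ∈ 𝓝 m := hγ.continuous.continuousAt.preimage_mem_nhds <|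
      e.open_target.mem_nhds (by rw [← hfL, hfe]; exact e.map_source hLe)
    obtain ⟨ε, hε, hεe⟩ := Metric.mem_nhds_iff.mp this
    refine ⟨ε / 2, half_pos hε, fun t ht ↦ hεe ?_⟩
    rw [← Real.closedBall_eq_Icc] at ht
    exact closedBall_subset_ball (half_lt_self hε) ht
  have h_ev : ∀ᶠ t in 𝓝[S] m, t ∈ S ∧ m - δ < t :=
    eventually_mem_nhdsWithin.and (nhdsWithin_le_nhds (Ioi_mem_nhds (sub_lt_self m hδ)))
  obtain ⟨t, ⟨htS, hmt⟩, hte⟩ :=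
    (h_ev.and_frequently (hL.frequently (e.open_source.mem_nhds hLe))).exists
  obtain ⟨Γ', hΓ'0, hΓ'c, hΓ'l⟩ := exists_lift_Icc_extend hγ.continuous htS.1
    ((hS_le t htS).trans (le_add_of_nonneg_right hδ.le)) (hΓc t htS) (hΓl t htS) e
    (hfe ▸ eqOn_refl _ _) hte (hδe.mono_left (Icc_subset_Icc_left hmt.le))
  have : m + δ ∈ S := ⟨by linarith [hS_le 0 h0S], Γ', hΓ'0.trans (hΓ0 t htS), hΓ'c, hΓ'l⟩
  linarith [hS_le _ this]

end PathLifting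

theorem IsLocalHomeomorph.exists_continuous_rightInverse [MetricSpace X]
    [ProperSpace X] [NormedAddCommGroup F] [NormedSpace ℝ F] {f : X → F}
    (hf : IsLocalHomeomorph f) {α : ℝ} (hα : 0 < α)
    (hexp : ∀ x, ∀ᶠ y in 𝓝 x, α * dist y x ≤ dist (f y) (f x)) (x₀ : X) :
    ∃ g : F → X, Continuous g ∧ RightInverse g f ∧ g (f x₀) = x₀ := by
  choose Γ hΓ0 hΓc hΓl using fun w ↦ exists_lift_Icc_of_lipschitzWith hf hα hexp
    (lipschitzWith_lineMap (f x₀) w) (x := x₀) (by simp) 1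
  let H : C(unitInterval × F, F) := ⟨fun q ↦ AffineMap.lineMap (f x₀) q.2 (q.1 : ℝ), by
    simp only [AffineMap.lineMap_apply_module]; fun_prop⟩
  have hcont : Continuous fun q : unitInterval × F ↦ Γ q.2 q.1 :=
    hf.continuous_lift (T2Space.isSeparatedMap f) H (funext fun q ↦ hΓl q.2 q.1.2)
      (by simpa only [Set.Icc.coe_zero, hΓ0] using continuous_const)
      (fun w ↦ (hΓc w).comp_continuous continuous_subtype_val fun t ↦ t.2)
  refine ⟨fun w ↦ Γ w 1, hcont.comp (Continuous.prodMk_right (1 : unitInterval)),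
    fun w ↦ by simpa using hΓl w ⟨zero_le_one, le_rfl⟩, ?_⟩
  exact (T2Space.isSeparatedMap f).eqOn_of_comp_eqOn hf.isLocallyInjective isPreconnected_Icc
    (hΓc (f x₀)) continuousOn_const (fun t ht ↦ by simpa using hΓl (f x₀) ht)
    ⟨le_rfl, zero_le_one⟩ (hΓ0 _) ⟨zero_le_one, le_rfl⟩

theorem IsPointwiseCovering.exists_lipschitzWith_inverse [MetricSpace X]
    [ProperSpace X] [PreconnectedSpace X] [Nonempty X] [NormedAddCommGroup F] [NormedSpace ℝ F]
    {α : ℝ} {f : X → F} (hcov : IsPointwiseCovering α f) (hα : 0 < α) (hf : Continuous f)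
    (hinj : IsLocallyInjective f) :
    ∃ g : F → X, LeftInverse g f ∧ RightInverse g f ∧ LipschitzWith (Real.toNNReal α⁻¹) g := by
  obtain ⟨x₀⟩ := ‹Nonempty X›
  obtain ⟨g, hg, hfg, hgx₀⟩ :=
    (hinj.isLocalHomeomorph hf (hcov.isOpenMap hα)).exists_continuous_rightInverse hα
      (hcov.eventually_mul_dist_le hα hf hinj) x₀
  have hgf : LeftInverse g f := congr_fun <| (T2Space.isSeparatedMap f).eq_of_comp_eq hinj
    (hg.comp hf) continuous_id (funext fun x ↦ hfg (f x)) x₀ hgx₀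
  refine ⟨g, hgf, hfg, LipschitzWith.of_dist_le_mul fun u v ↦ ?_⟩
  obtain ⟨z, rfl, hz⟩ := hcov.exists_preimage_mul_dist_le hα hf (g v) u
  rw [Real.coe_toNNReal _ (inv_nonneg.2 hα.le), hgf z, le_inv_mul_iff₀ hα]
  rwa [hfg v] at hz

theorem stmt12_general (n : ℕ) (α : ℝ) (hα : 0 < α)
    (f : EuclideanSpace ℝ (Fin n) → EuclideanSpace ℝ (Fin n))
    (hcont : Continuous f)
    (hlocinj : ∀ x, ∃ U ∈ nhds x, Set.InjOn f U)
    (hcov : ∀ x, ∀ ε : ℝ, 0 < ε → ∃ r : ℝ, 0 < r ∧ r ≤ ε ∧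
      Metric.closedBall (f x) (α * r) ⊆ f '' Metric.closedBall x r) :
    IsHomeomorph f ∧ ∃ g : EuclideanSpace ℝ (Fin n) → EuclideanSpace ℝ (Fin n),
      Function.LeftInverse g f ∧ Function.RightInverse g f ∧
        LipschitzWith (Real.toNNReal α⁻¹) g := by
  obtain ⟨g, hgf, hfg, hg⟩ := IsPointwiseCovering.exists_lipschitzWith_inverse hcov hα hcont
    (isLocallyInjective_iff_nhds.mpr hlocinj)
  exact ⟨isHomeomorph_iff_exists_inverse.mpr ⟨hcont, g, hgf, hfg, hg.continuous⟩, g, hgf, hfg, hg⟩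

theorem stmt12 (n : ℕ) (hn : 1 ≤ n) (α : ℝ) (hα : 0 < α)
    (f : EuclideanSpace ℝ (Fin n) → EuclideanSpace ℝ (Fin n))
    (hcont : Continuous f)
    (hlocinj : ∀ x, ∃ U ∈ nhds x, Set.InjOn f U)
    (hcov : ∀ x, ∀ ε : ℝ, 0 < ε → ∃ r : ℝ, 0 < r ∧ r ≤ ε ∧
      Metric.closedBall (f x) (α * r) ⊆ f '' Metric.closedBall x r) :
    IsHomeomorph f ∧ ∃ g : EuclideanSpace ℝ (Fin n) → EuclideanSpace ℝ (Fin n),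
      Function.LeftInverse g f ∧ Function.RightInverse g f ∧
        LipschitzWith (Real.toNNReal α⁻¹) g :=
  stmt12_general n α hα f hcont hlocinj hcov
end

section
/- Let A be a real n×n matrix all of whose (complex) eigenvalues have strictly negative real part. Then for every y₀ ∈ ℝⁿ, the solution y(t) = exp(tA) y₀ of the linear system ẏ = Ay tends to 0 as t → +∞. -/
/-!
Over `ℂ`, the space is spanned by the generalized eigenvectors of `A`. If `(A - μ)^k w = 0`, then
`exp (t A) w = e^{tμ} ∑_{j<k} t^j / j! (A - μ)^j w`, and every term tends to `0` because
`Re μ < 0`.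
A real solution is the real part of the corresponding complex one.
-/

open Filter Topology NormedSpace Matrix
open scoped Nat

attribute [local instance] Matrix.linftyOpNormedRing Matrix.linftyOpNormedAlgebra

theorem Real.tendsto_pow_mul_exp_mul_atTop_nhds_zero {c : ℝ} (hc : c < 0) (j : ℕ) :
    Tendsto (fun t : ℝ => t ^ j * Real.exp (c * t)) atTop (𝓝 0) := by
  simpa [Real.rpow_natCast] using
    tendsto_rpow_mul_exp_neg_mul_atTop_nhds_zero j (-c) (neg_pos.mpr hc)

theorem Complex.tendsto_exp_mul_mul_pow_atTop_nhds_zero {μ : ℂ} (hμ : μ.re < 0) (j : ℕ) :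
    Tendsto (fun t : ℝ => Complex.exp (t * μ) * (t : ℂ) ^ j) atTop (𝓝 0) := by
  rw [tendsto_zero_iff_norm_tendsto_zero]
  refine (Real.tendsto_pow_mul_exp_mul_atTop_nhds_zero hμ j).congr' ?_
  filter_upwards [eventually_ge_atTop 0] with t ht
  simp [Complex.norm_exp, abs_of_nonneg ht, mul_comm]

namespace Matrix

variable {m : Type*} [Fintype m] [DecidableEq m]

theorem exp_mulVec_eq_sum_of_pow_mulVec_eq_zero {N : Matrix m m ℂ} {w : m → ℂ} {k : ℕ}
    (hk : N ^ k *ᵥ w = 0) :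
    exp N *ᵥ w = ∑ j ∈ Finset.range k, (j ! : ℂ)⁻¹ • (N ^ j *ᵥ w) := by
  have hsum := (NormedSpace.exp_series_hasSum_exp' (𝕂 := ℂ) N).map
    (mulVec.addMonoidHomLeft w) (continuous_id.matrix_mulVec continuous_const)
  have hvanish : ∀ j ≥ k, N ^ j *ᵥ w = 0 := fun j hj => by
    rw [← Nat.sub_add_cancel hj, pow_add, ← mulVec_mulVec, hk, mulVec_zero]
  calc exp N *ᵥ w = ∑' j : ℕ, (j ! : ℂ)⁻¹ • (N ^ j *ᵥ w) := by
        simp_rw [← smul_mulVec]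
        exact hsum.tsum_eq.symm
    _ = _ := tsum_eq_sum fun j hj => by
        rw [hvanish j (by simpa using hj), smul_zero]

theorem exp_smul_mulVec_eq_of_pow_sub_smul_mulVec_eq_zero {B : Matrix m m ℂ} {μ : ℂ}
    {w : m → ℂ} {k : ℕ} (hk : (B - μ • 1) ^ k *ᵥ w = 0) (z : ℂ) :
    exp (z • B) *ᵥ w = Complex.exp (z * μ) •
      ∑ j ∈ Finset.range k, (z ^ j * (j ! : ℂ)⁻¹) • ((B - μ • 1) ^ j *ᵥ w) := by
  set N := B - μ • 1
  have hB : z • B = algebraMap ℂ _ (z * μ) + z • N := by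
    simp [N, Algebra.algebraMap_eq_smul_one, smul_sub, smul_smul]
  have hzN : (z • N) ^ k *ᵥ w = 0 := by rw [smul_pow, smul_mulVec, hk, smul_zero]
  have hscalar :
      exp (algebraMap ℂ (Matrix m m ℂ) (z * μ)) = algebraMap ℂ _ (Complex.exp (z * μ)) := by
    rw [Complex.exp_eq_exp_ℂ]; exact (algebraMap_exp_comm _).symm
  rw [hB, exp_add_of_commute _ _ (Algebra.commute_algebraMap_left _ _), hscalar,
    Algebra.algebraMap_eq_smul_one, smul_mul, one_mul, smul_mulVec,
    exp_mulVec_eq_sum_of_pow_mulVec_eq_zero hzN]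
  simp only [smul_pow, smul_mulVec, smul_smul, mul_comm]

theorem tendsto_exp_smul_mulVec_of_pow_sub_smul_mulVec_eq_zero {B : Matrix m m ℂ} {μ : ℂ}
    (hμ : μ.re < 0) {w : m → ℂ} {k : ℕ} (hk : (B - μ • 1) ^ k *ᵥ w = 0) :
    Tendsto (fun t : ℝ => exp (t • B) *ᵥ w) atTop (𝓝 0) := by
  simp_rw [← Complex.coe_smul, exp_smul_mulVec_eq_of_pow_sub_smul_mulVec_eq_zero hk,
    Finset.smul_sum, smul_smul, ← mul_assoc]
  rw [← Finset.sum_const_zero (s := Finset.range k)]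
  refine tendsto_finsetSum _ fun j _ => ?_
  simpa using ((Complex.tendsto_exp_mul_mul_pow_atTop_nhds_zero hμ j).mul_const
    (j ! : ℂ)⁻¹).smul_const ((B - μ • 1) ^ j *ᵥ w)

theorem tendsto_exp_smul_mulVec_atTop_nhds_zero {B : Matrix m m ℂ}
    (h : ∀ μ ∈ spectrum ℂ B, μ.re < 0) (v : m → ℂ) :
    Tendsto (fun t : ℝ => exp (t • B) *ᵥ v) atTop (𝓝 0) := by
  have hv : v ∈ ⨆ μ, Module.End.maxGenEigenspace (toLinAlgEquiv' B) μ := by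
    rw [Module.End.iSup_maxGenEigenspace_eq_top]; trivial
  refine Submodule.iSup_induction _ hv
    (motive := fun v => Tendsto (fun t : ℝ => exp (t • B) *ᵥ v) atTop (𝓝 0))
    (fun μ w hw => ?_) (by simp)
    fun x y hx hy => by simpa [mulVec_add] using hx.add hy
  by_cases hw0 : w = 0
  · simp [hw0]
  have hμ : μ ∈ spectrum ℂ B := by
    have hgen : Module.End.HasUnifEigenvalue (toLinAlgEquiv' B) μ ⊤ := fun hbot =>
      hw0 (by simpa [hbot] using hw)
    simpa [AlgEquiv.spectrum_eq] using (hgen.lt zero_lt_one).mem_spectrum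
  obtain ⟨k, hk⟩ := (Module.End.mem_maxGenEigenspace _ _ _).mp hw
  rw [← map_one (toLinAlgEquiv' (R := ℂ) (n := m)), ← map_smul, ← map_sub, ← map_pow,
    toLinAlgEquiv'_apply] at hk
  exact tendsto_exp_smul_mulVec_of_pow_sub_smul_mulVec_eq_zero (h μ hμ) hk

theorem exp_map_ofReal (A : Matrix m m ℝ) :
    exp (A.map Complex.ofReal) = (exp A).map Complex.ofReal :=
  (map_exp Complex.ofRealHom.mapMatrix (continuous_id.matrix_map Complex.continuous_ofReal) A).symm

theorem exp_smul_map_ofReal_mulVec (A : Matrix m m ℝ) (t : ℝ) (v : m → ℝ) :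
    exp (t • A.map Complex.ofReal) *ᵥ (fun i => (v i : ℂ)) =
      fun i => ((exp (t • A) *ᵥ v) i : ℂ) := by
  have hsmul : t • A.map Complex.ofReal = (t • A).map Complex.ofReal := by
    ext i j; simp
  rw [hsmul, exp_map_ofReal]
  exact funext fun i => (RingHom.map_mulVec Complex.ofRealHom _ v i).symm

theorem tendsto_exp_smul_mulVec_atTop_nhds_zero_of_map_ofReal {A : Matrix m m ℝ}
    (h : ∀ μ ∈ spectrum ℂ (A.map Complex.ofReal), μ.re < 0) (v : m → ℝ) :
    Tendsto (fun t : ℝ => exp (t • A) *ᵥ v) atTop (𝓝 0) := by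
  have hre : Continuous fun w : m → ℂ => fun i => (w i).re := by fun_prop
  have hlim := (hre.tendsto 0).comp (tendsto_exp_smul_mulVec_atTop_nhds_zero h fun i => (v i : ℂ))
  simp only [exp_smul_map_ofReal_mulVec, Function.comp_def, Complex.ofReal_re] at hlim
  exact hlim

end Matrix

theorem stmt13 (n : ℕ) (A : Matrix (Fin n) (Fin n) ℝ)
    (h : ∀ mu ∈ spectrum ℂ (A.map (Complex.ofReal)), mu.re < 0) :
    ∀ y₀ : EuclideanSpace ℝ (Fin n),
      Filter.Tendsto
        (fun t : ℝ =>
          NormedSpace.exp (t • (Matrix.toEuclideanCLM (𝕜 := ℝ) A)) y₀)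
        Filter.atTop (nhds 0) := by
  intro y₀
  have hcont : Continuous (toEuclideanCLM (𝕜 := ℝ) (n := Fin n)) :=
    LinearMap.continuous_of_finiteDimensional
      (toEuclideanCLM (𝕜 := ℝ) (n := Fin n)).toAlgEquiv.toLinearMap
  have hexp (t : ℝ) : exp (t • toEuclideanCLM (𝕜 := ℝ) A) y₀ =
      WithLp.toLp 2 (exp (t • A) *ᵥ WithLp.ofLp y₀) := by
    rw [← map_smul, ← map_exp _ hcont, ← toEuclideanCLM_toLp]
    rfl
  have hlim := ((PiLp.continuous_toLp 2 _).tendsto 0).comp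
    (tendsto_exp_smul_mulVec_atTop_nhds_zero_of_map_ofReal h (WithLp.ofLp y₀))
  rw [WithLp.toLp_zero] at hlim
  exact hlim.congr fun t => (hexp t).symm
end

section
/- Consider the vector field F : ℝ³ → ℝ³ given by F(x,y,z) = (−x + z(x+yz)², −y − (x+yz)², −z). The curve γ(t) = (18e^t, −12e^{2t}, e^{−t}) satisfies γ'(t) = F(γ(t)) for all t ∈ ℝ, and ‖γ(t)‖ → ∞ as t → ∞; in particular, the system ẋ = F(x) admits a solution that does not tend to the equilibrium point 0. -/
/-! Along `γ14` the quadratic term `x + y z` collapses to `6 eᵗ`, so `F14 (γ14 t)` is an explicit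
combination of exponentials that matches the termwise derivative of `γ14`. The first coordinate
`18 eᵗ` alone forces `‖γ14 t‖ → ∞`, which rules out convergence to any point. -/

noncomputable def F14 : ℝ × ℝ × ℝ → ℝ × ℝ × ℝ := fun p =>
  (-p.1 + p.2.2 * (p.1 + p.2.1 * p.2.2) ^ 2,
    -p.2.1 - (p.1 + p.2.1 * p.2.2) ^ 2,
    -p.2.2)

noncomputable def γ14 : ℝ → ℝ × ℝ × ℝ := fun t =>
  (18 * Real.exp t, -12 * Real.exp (2 * t), Real.exp (-t))

open Filter Real

theorem not_tendsto_nhds_of_tendsto_norm_atTop {α E : Type*} [SeminormedAddCommGroup E]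
    {l : Filter α} [l.NeBot] {f : α → E} (hf : Tendsto (fun a => ‖f a‖) l atTop) (x : E) :
    ¬ Tendsto f l (nhds x) :=
  fun h => not_tendsto_nhds_of_tendsto_atTop hf _ h.norm

theorem hasDerivAt_γ14 (t : ℝ) :
    HasDerivAt γ14 (18 * exp t, -24 * exp (2 * t), -exp (-t)) t := by
  have hx := (hasDerivAt_exp t).const_mul 18
  have hy := ((hasDerivAt_exp (2 * t)).comp t ((hasDerivAt_id t).const_mul 2)).const_mul (-12)
  have hz := (hasDerivAt_exp (-t)).comp t (hasDerivAt_neg t)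
  convert hx.prodMk (hy.prodMk hz) using 1
  · rfl
  · refine Prod.ext rfl (Prod.ext ?_ ?_) <;> dsimp only <;> ring

theorem γ14_fst_add_mul (t : ℝ) :
    (γ14 t).1 + (γ14 t).2.1 * (γ14 t).2.2 = 6 * exp t := by
  have h : exp (2 * t) * exp (-t) = exp t := by rw [← exp_add]; ring_nf
  simp only [γ14]
  linear_combination (-12) * h

theorem F14_γ14 (t : ℝ) :
    F14 (γ14 t) = (18 * exp t, -24 * exp (2 * t), -exp (-t)) := by
  have h := γ14_fst_add_mul t
  simp only [F14] at h ⊢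
  rw [h]
  have hneg : exp (-t) * exp t = 1 := by rw [← exp_add, neg_add_cancel, exp_zero]
  have hsq : exp t ^ 2 = exp (2 * t) := by rw [← exp_nat_mul]; norm_num
  simp only [γ14]
  refine Prod.ext ?_ (Prod.ext ?_ rfl)
  · linear_combination 36 * exp t * hneg
  · linear_combination (-36) * hsq

theorem tendsto_norm_γ14_atTop : Tendsto (fun t => ‖γ14 t‖) atTop atTop := by
  refine tendsto_atTop_mono (fun t => ?_)
    (tendsto_exp_atTop.const_mul_atTop (by norm_num : (0 : ℝ) < 18))
  calc 18 * exp t = ‖(γ14 t).1‖ := by simp [γ14, abs_of_pos (exp_pos t)]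
    _ ≤ ‖γ14 t‖ := norm_fst_le _

theorem stmt14 :
    (∀ t : ℝ, HasDerivAt γ14 (F14 (γ14 t)) t) ∧
      Filter.Tendsto (fun t => ‖γ14 t‖) Filter.atTop Filter.atTop ∧
      ¬ Filter.Tendsto γ14 Filter.atTop (nhds 0) :=
  ⟨fun t => F14_γ14 t ▸ hasDerivAt_γ14 t, tendsto_norm_γ14_atTop,
    not_tendsto_nhds_of_tendsto_norm_atTop tendsto_norm_γ14_atTop 0⟩
end

section
/- Let f : ℝⁿ → ℝⁿ be continuously differentiable with f'(x) invertible for every x, and suppose there is a constant A < ∞ with ‖f'(x)⁻¹‖ ≤ A for all x ∈ ℝⁿ. Then f is injective. -/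
/-!
A `C¹` map whose derivative is everywhere invertible is a local homeomorphism, and the bound
`‖f'(x)⁻¹‖ ≤ A` makes its local inverses uniform: over a compact set of base points there is one
`δ > 0` such that `f` has a `2A`-Lipschitz inverse on the `δ`-ball around each image point.
Chaining these local inverses, every `L`-Lipschitz path lifts through `f`, and the lift moves by at
most `2AL`, so it never leaves the compact set on which the radius `δ` was chosen.

If `f a = f b`, then `f` maps the segment from `a` to `b` to a loop at `f a`, which the
straight-line homotopy contracts through Lipschitz paths. By the monodromy theorem the endpoints
of the lifts of these paths starting at `a` agree; for the loop itself the lift is the segment,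
ending at `b`, and for the constant path it is constant at `a`.
-/

open Set Metric Function unitInterval
open scoped NNReal

section Topology

variable {X Y : Type*} [TopologicalSpace X] [TopologicalSpace Y]

theorem exists_continuous_extend_lift {p : X → Y} {g : Y → X} {U : Set Y} {Γ : ℝ → X}
    {γ : ℝ → Y} {T T' : ℝ} (hΓ : Continuous Γ) (hγ : Continuous γ) (hg : ContinuousOn g U)
    (hpg : RightInvOn g p U) (hγU : MapsTo γ (Icc T T') U) (hgT : g (γ T) = Γ T)
    (hTT' : T ≤ T') :
    ∃ Γ' : ℝ → X, Continuous Γ' ∧ EqOn Γ' Γ (Iic T) ∧ EqOn (p ∘ Γ') γ (Icc T T') ∧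
      Γ' T' = g (γ T') := by
  have hcont : ContinuousOn (fun t => g (γ (min t T'))) {t | T ≤ t} :=
    hg.comp (hγ.comp (continuous_id.min continuous_const)).continuousOn
      fun t ht => hγU ⟨le_min ht hTT', min_le_right _ _⟩
  refine ⟨fun t => if t ≤ T then Γ t else g (γ (min t T')),
    continuous_if_le continuous_id continuous_const hΓ.continuousOn hcont ?_,
    fun t ht => if_pos ht, fun t ht => ?_, ?_⟩
  · rintro t rfl
    rw [min_eq_left hTT', hgT]
  · rcases ht.1.eq_or_lt with rfl | hlt
    · simp only [comp_apply, le_refl, if_true, ← hgT, hpg (hγU ⟨le_rfl, hTT'⟩)]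
    · simp only [comp_apply, not_le.2 hlt, if_false, min_eq_left ht.2, hpg (hγU ht)]
  · rcases hTT'.eq_or_lt with rfl | hlt
    · simp only [le_refl, if_true, hgT]
    · simp only [not_le.2 hlt, if_false, min_self]

theorem IsLocalHomeomorph.apply_one_eq_apply_zero_of_homotopyRel_const [T2Space X]
    {p : X → Y} (hp : IsLocalHomeomorph p) {ρ : C(I, X)} {γ₀ : C(I, Y)} {y : Y}
    (hρ : ∀ s, p (ρ s) = γ₀ s) (H : γ₀.HomotopyRel (.const I y) {0, 1})
    (hlift : ∀ t, ∃ Γ : C(I, X), Γ 0 = ρ 0 ∧ ∀ s, p (Γ s) = H (t, s)) :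
    ρ 1 = ρ 0 := by
  have hsep := T2Space.isSeparatedMap p
  choose Γ hΓ0 hΓ using hlift
  have hmono := hp.monodromy_theorem hsep H Γ hΓ (fun t => (hΓ0 t).trans (hΓ0 0).symm) 1
  have hstart : Γ 0 = ρ := ContinuousMap.ext <| congr_fun <|
    hsep.eq_of_comp_eq hp.isLocallyInjective (Γ 0).continuous ρ.continuous
      (funext fun s => by simp [hΓ, hρ]) 0 (hΓ0 0)
  have hend : Γ 1 1 = Γ 1 0 :=
    hsep.const_of_comp hp.isLocallyInjective (Γ 1).continuous (fun s s' => by simp [hΓ]) 1 0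
  rw [← hstart, ← hmono, hend, hΓ0, hΓ0]

end Topology

theorem exists_lift_extend_of_lipschitzOnWith {X Y : Type*} [PseudoMetricSpace X]
    [PseudoMetricSpace Y] {f : X → Y} {g : Y → X} {Γ : ℝ → X} {γ : ℝ → Y}
    {C L : ℝ≥0} {δ T T' : ℝ} (hΓ : Continuous Γ) (hγ : LipschitzWith L γ) (hT : 0 ≤ T)
    (hTT' : T ≤ T') (hδ : L * (T' - T) ≤ δ) (hΓγ : EqOn (f ∘ Γ) γ (Icc 0 T))
    (hgT : g (γ T) = Γ T) (hg : RightInvOn g f (closedBall (γ T) δ))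
    (hgC : LipschitzOnWith C g (closedBall (γ T) δ)) :
    ∃ Γ' : ℝ → X, Continuous Γ' ∧ Γ' 0 = Γ 0 ∧ EqOn (f ∘ Γ') γ (Icc 0 T') ∧
      dist (Γ' T') (Γ T) ≤ C * L * (T' - T) := by
  have hγT : ∀ t ∈ Icc T T', dist (γ t) (γ T) ≤ L * (T' - T) := fun t ht => by
    refine (hγ.dist_le_mul t T).trans ?_
    rw [Real.dist_eq, abs_of_nonneg (by linarith [ht.1])]
    gcongr
    exact ht.2
  have hγU : MapsTo γ (Icc T T') (closedBall (γ T) δ) := fun t ht =>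
    mem_closedBall.2 ((hγT t ht).trans hδ)
  obtain ⟨Γ', hΓ', hΓ'Γ, hΓ'γ, hΓ'T'⟩ :=
    exists_continuous_extend_lift hΓ hγ.continuous hgC.continuousOn hg hγU hgT hTT'
  refine ⟨Γ', hΓ', hΓ'Γ hT, fun t ht => ?_, ?_⟩
  · rcases le_total t T with htT | htT
    · rw [comp_apply, hΓ'Γ htT]
      exact hΓγ ⟨ht.1, htT⟩
    · exact hΓ'γ ⟨htT, ht.2⟩
  · calc dist (Γ' T') (Γ T) = dist (g (γ T')) (g (γ T)) := by rw [hΓ'T', hgT]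
      _ ≤ C * dist (γ T') (γ T) :=
        hgC.dist_le_mul _ (hγU ⟨hTT', le_rfl⟩) _ (hγU ⟨le_rfl, hTT'⟩)
      _ ≤ C * (L * (T' - T)) := by gcongr; exact hγT T' ⟨hTT', le_rfl⟩
      _ = C * L * (T' - T) := (mul_assoc _ _ _).symm

variable {E F : Type*} [NormedAddCommGroup E] [NormedSpace ℝ E] [NormedAddCommGroup F]
  [NormedSpace ℝ F]

theorem IsCompact.exists_approximatesLinearOn_closedBall {f : E → F} (hf : ContDiff ℝ 1 f)
    {K : Set E} (hK : IsCompact K) {ε : ℝ≥0} (hε : 0 < ε) :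
    ∃ r > 0, ∀ x ∈ K, ApproximatesLinearOn f (fderiv ℝ f x) (closedBall x r) ε := by
  obtain ⟨r, hr, hclose⟩ := mem_uniformity_dist.1 <|
    hK.uniformContinuousAt_of_continuousAt (fderiv ℝ f)
      (fun x _ => (hf.continuous_fderiv one_ne_zero).continuousAt) (dist_mem_uniformity hε)
  refine ⟨r / 2, half_pos hr, fun x hx u hu v hv => ?_⟩
  refine (convex_closedBall x (r / 2)).norm_image_sub_le_of_norm_hasFDerivWithin_le'
    (fun w _ => (hf.differentiable one_ne_zero w).hasFDerivAt.hasFDerivWithinAt)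
    (fun w hw => ?_) hv hu
  have hxw : dist x w < r := by
    rw [dist_comm]
    exact (mem_closedBall.1 hw).trans_lt (half_lt_self hr)
  rw [← dist_eq_norm, dist_comm]
  exact (hclose hxw hx).le

theorem ApproximatesLinearOn.norm_sub_le_of_norm_symm_le {f : E → F} {f' : E ≃L[ℝ] F}
    {s : Set E} {c : ℝ≥0} (hf : ApproximatesLinearOn f (f' : E →L[ℝ] F) s c) {A : ℝ}
    (hA : ‖(f'.symm : F →L[ℝ] E)‖ ≤ A) (hAc : 2 * A * c ≤ 1) {u v : E} (hu : u ∈ s)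
    (hv : v ∈ s) : ‖u - v‖ ≤ 2 * A * ‖f u - f v‖ := by
  have hA0 : 0 ≤ A := (norm_nonneg _).trans hA
  have hinv : ‖u - v‖ ≤ A * ‖f' (u - v)‖ := by
    calc ‖u - v‖ = ‖(f'.symm : F →L[ℝ] E) (f' (u - v))‖ := by simp
      _ ≤ ‖(f'.symm : F →L[ℝ] E)‖ * ‖f' (u - v)‖ := ContinuousLinearMap.le_opNorm _ _
      _ ≤ A * ‖f' (u - v)‖ := by gcongr
  have happrox : ‖f' (u - v)‖ ≤ ‖f u - f v‖ + c * ‖u - v‖ := by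
    calc ‖f' (u - v)‖ = ‖(f u - f v) - (f u - f v - f' (u - v))‖ := by rw [sub_sub_cancel]
      _ ≤ ‖f u - f v‖ + ‖f u - f v - f' (u - v)‖ := norm_sub_le _ _
      _ ≤ ‖f u - f v‖ + c * ‖u - v‖ := by gcongr; exact hf u hu v hv
  nlinarith [mul_le_mul_of_nonneg_right hAc (norm_nonneg (u - v)),
    mul_le_mul_of_nonneg_left happrox hA0]

theorem ContDiff.isLocalHomeomorph [CompleteSpace E] {f : E → F} (hf : ContDiff ℝ 1 f)
    (hf' : ∀ x, ∃ g : E ≃L[ℝ] F, (g : E →L[ℝ] F) = fderiv ℝ f x) : IsLocalHomeomorph f := by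
  intro x
  obtain ⟨g, hg⟩ := hf' x
  have hstrict : HasStrictFDerivAt f (g : E →L[ℝ] F) x :=
    hg ▸ hf.contDiffAt.hasStrictFDerivAt one_ne_zero
  exact ⟨hstrict.toOpenPartialHomeomorph f, hstrict.mem_toOpenPartialHomeomorph_source, rfl⟩

theorem ContDiff.exists_lipschitzWith_comp_lineMap {f : E → F} (hf : ContDiff ℝ 1 f)
    (a b : E) : ∃ K, LipschitzWith K fun s : I => f (AffineMap.lineMap a b (s : ℝ)) := by
  have hψ : ContDiff ℝ 1 fun s : ℝ => f (AffineMap.lineMap a b s) := hf.comp (by fun_prop)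
  obtain ⟨K, hK⟩ :=
    hψ.locallyLipschitz.locallyLipschitzOn.exists_lipschitzOnWith_of_compact isCompact_Icc
  exact ⟨K, hK.to_restrict⟩

theorem LipschitzWith.lineMap_left {α : Type*} [PseudoMetricSpace α] {φ : α → E} {K : ℝ≥0}
    (hφ : LipschitzWith K φ) (c : E) {t : ℝ} (ht : t ∈ Icc (0 : ℝ) 1) :
    LipschitzWith K fun s => AffineMap.lineMap (φ s) c t := by
  refine LipschitzWith.of_dist_le_mul fun s s' => ?_
  have h1t : ‖1 - t‖ ≤ 1 := by
    rw [Real.norm_eq_abs, abs_le]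
    constructor <;> linarith [ht.1, ht.2]
  calc dist (AffineMap.lineMap (φ s) c t) (AffineMap.lineMap (φ s') c t)
        = ‖1 - t‖ * dist (φ s) (φ s') := by
        rw [dist_eq_norm, dist_eq_norm, AffineMap.lineMap_apply_module,
          AffineMap.lineMap_apply_module, ← norm_smul, smul_sub]
        abel_nf
    _ ≤ 1 * (K * dist s s') := by gcongr; exact hφ.dist_le_mul s s'
    _ = K * dist s s' := one_mul _

def HasBoundedInverseFDeriv (f : E → E) (A : ℝ) : Prop :=
  ∀ x, ∃ g : E ≃L[ℝ] E, (g : E →L[ℝ] E) = fderiv ℝ f x ∧ ‖(g.symm : E →L[ℝ] E)‖ ≤ A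

namespace HasBoundedInverseFDeriv

variable {f : E → E} {A : ℝ}

theorem pos [Nontrivial E] (hinv : HasBoundedInverseFDeriv f A) : 0 < A :=
  let ⟨g, _, hg⟩ := hinv 0
  g.norm_symm_pos.trans_le hg

theorem exists_uniform_localInverse [CompleteSpace E] [Nontrivial E]
    (hinv : HasBoundedInverseFDeriv f A) (hf : ContDiff ℝ 1 f) {K : Set E} (hK : IsCompact K) :
    ∃ δ > 0, ∀ x ∈ K, ∃ g : E → E, g (f x) = x ∧ RightInvOn g f (closedBall (f x) δ) ∧
      LipschitzOnWith (Real.toNNReal (2 * A)) g (closedBall (f x) δ) := by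
  have hA := hinv.pos
  set c : ℝ≥0 := Real.toNNReal (2 * A)⁻¹
  have hc : (c : ℝ) = (2 * A)⁻¹ := Real.coe_toNNReal _ (by positivity)
  obtain ⟨r, hr, happrox⟩ := hK.exists_approximatesLinearOn_closedBall hf
    (show 0 < c by rw [← NNReal.coe_pos, hc]; positivity)
  refine ⟨r / (2 * A), by positivity, fun x hx => ?_⟩
  obtain ⟨g, hg, hgA⟩ := hinv x
  have hx : ApproximatesLinearOn f (g : E →L[ℝ] E) (closedBall x r) c := hg ▸ happrox x hx
  have hanti : ∀ u ∈ closedBall x r, ∀ v ∈ closedBall x r, ‖u - v‖ ≤ 2 * A * ‖f u - f v‖ :=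
    fun u hu v hv => hx.norm_sub_le_of_norm_symm_le hgA
      (by rw [hc, mul_inv_cancel₀ (by positivity)]) hu hv
  have hinj : InjOn f (closedBall x r) := fun u hu v hv huv => by
    simpa [huv, sub_eq_zero] using hanti u hu v hv
  have hradius : r / (2 * A) ≤ ((g.toNonlinearRightInverse.nnnorm : ℝ)⁻¹ - c) * r := by
    have hgA' : A⁻¹ ≤ ‖(g.symm : E →L[ℝ] E)‖⁻¹ := inv_anti₀ g.norm_symm_pos hgA
    change r / (2 * A) ≤ (‖(g.symm : E →L[ℝ] E)‖⁻¹ - c) * r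
    rw [hc, div_eq_mul_inv, mul_comm]
    gcongr
    linarith [show A⁻¹ = (2 * A)⁻¹ + (2 * A)⁻¹ by field_simp; ring]
  have hsurj : SurjOn f (closedBall x r) (closedBall (f x) (r / (2 * A))) :=
    (hx.surjOn_closedBall_of_nonlinearRightInverse g.toNonlinearRightInverse hr.le
      subset_rfl).mono subset_rfl (closedBall_subset_closedBall hradius)
  refine ⟨invFunOn f (closedBall x r), hinj.leftInvOn_invFunOn (mem_closedBall_self hr.le),
    hsurj.rightInvOn_invFunOn, LipschitzOnWith.of_dist_le' fun y hy y' hy' => ?_⟩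
  have h := hanti _ (hsurj.mapsTo_invFunOn hy) _ (hsurj.mapsTo_invFunOn hy')
  rwa [hsurj.rightInvOn_invFunOn hy, hsurj.rightInvOn_invFunOn hy', ← dist_eq_norm,
    ← dist_eq_norm] at h

theorem exists_lift_of_lipschitzWith_real [ProperSpace E] [Nontrivial E]
    (hinv : HasBoundedInverseFDeriv f A) (hf : ContDiff ℝ 1 f) {γ : ℝ → E} {L : ℝ≥0}
    (hγ : LipschitzWith L γ) {e : E} (he : f e = γ 0) :
    ∃ Γ : ℝ → E, Continuous Γ ∧ Γ 0 = e ∧ EqOn (f ∘ Γ) γ (Icc 0 1) := by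
  set C := Real.toNNReal (2 * A)
  obtain ⟨δ, hδ, hinverse⟩ :=
    hinv.exists_uniform_localInverse hf (isCompact_closedBall e (C * L))
  obtain ⟨N, hN⟩ := exists_nat_gt (L / δ)
  have hN0 : (0 : ℝ) < N := (div_nonneg L.2 hδ.le).trans_lt hN
  have hLN : L * (1 / N) ≤ δ := by
    rw [div_lt_iff₀ hδ] at hN
    rw [← div_eq_mul_one_div, div_le_iff₀ hN0]
    linarith
  suffices ∀ k ≤ N, ∃ Γ : ℝ → E, Continuous Γ ∧ Γ 0 = e ∧ EqOn (f ∘ Γ) γ (Icc 0 (k / N)) ∧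
      dist (Γ (k / N)) e ≤ C * L * (k / N) by
    obtain ⟨Γ, hΓ, hΓ0, hΓγ, -⟩ := this N le_rfl
    exact ⟨Γ, hΓ, hΓ0, by rwa [div_self hN0.ne'] at hΓγ⟩
  intro k hk
  induction k with
  | zero =>
    refine ⟨fun _ => e, continuous_const, rfl, fun t ht => ?_, by simp⟩
    obtain rfl : t = 0 := by simpa using ht
    exact he
  | succ k ih =>
    obtain ⟨Γ, hΓ, hΓ0, hΓγ, hΓe⟩ := ih (by omega)
    have hk : (k : ℝ) / N ≤ 1 := div_le_one_of_le₀ (by exact_mod_cast (by omega : k ≤ N)) hN0.le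
    have hstep : ((k + 1 : ℕ) : ℝ) / N - k / N = 1 / N := by push_cast; ring
    obtain ⟨g, hgΓ, hg, hgC⟩ :=
      hinverse (Γ (k / N)) (hΓe.trans (mul_le_of_le_one_right (by positivity) hk))
    have hfΓ : f (Γ (k / N)) = γ (k / N) := hΓγ ⟨by positivity, le_rfl⟩
    rw [hfΓ] at hgΓ hg hgC
    obtain ⟨Γ', hΓ', hΓ'0, hΓ'γ, hΓ'Γ⟩ := exists_lift_extend_of_lipschitzOnWith hΓ hγ
      (by positivity) (sub_nonneg.1 (hstep ▸ by positivity)) (hstep ▸ hLN) hΓγ hgΓ hg hgC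
    refine ⟨Γ', hΓ', hΓ'0.trans hΓ0, hΓ'γ, ?_⟩
    calc dist (Γ' ((k + 1 : ℕ) / N)) e
        ≤ dist (Γ' ((k + 1 : ℕ) / N)) (Γ (k / N)) + dist (Γ (k / N)) e := dist_triangle _ _ _
      _ ≤ C * L * (1 / N) + C * L * (k / N) := by rw [← hstep]; gcongr
      _ = C * L * ((k + 1 : ℕ) / N) := by push_cast; ring

theorem exists_lift_of_lipschitzWith [ProperSpace E] [Nontrivial E]
    (hinv : HasBoundedInverseFDeriv f A) (hf : ContDiff ℝ 1 f) {γ : C(I, E)} {L : ℝ≥0}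
    (hγ : LipschitzWith L γ) {e : E} (he : f e = γ 0) :
    ∃ Γ : C(I, E), Γ 0 = e ∧ ∀ s, f (Γ s) = γ s := by
  obtain ⟨Γ, hΓ, hΓ0, hΓγ⟩ := hinv.exists_lift_of_lipschitzWith_real hf
    (hγ.comp (LipschitzWith.projIcc zero_le_one)) (e := e) (by simpa [IccExtend] using he)
  refine ⟨⟨Γ ∘ Subtype.val, hΓ.comp continuous_subtype_val⟩, hΓ0, fun s => ?_⟩
  simpa using hΓγ s.2

theorem injective [ProperSpace E] (hinv : HasBoundedInverseFDeriv f A) (hf : ContDiff ℝ 1 f) :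
    Injective f := by
  rcases subsingleton_or_nontrivial E with hE | hE
  · exact injective_of_subsingleton f
  intro a b hab
  obtain ⟨K, hK⟩ := hf.exists_lipschitzWith_comp_lineMap a b
  let φ : C(I, E) := ⟨fun s => f (AffineMap.lineMap a b (s : ℝ)), by fun_prop⟩
  let H : φ.HomotopyRel (.const I (f a)) {0, 1} :=
    { ContinuousMap.Homotopy.affine φ (.const I (f a)) with
      prop' t s hs := by rcases hs with rfl | rfl <;> simp [φ, hab] }
  have hloc : IsLocalHomeomorph f := hf.isLocalHomeomorph fun x => (hinv x).imp fun _ h => h.1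
  have hloop := hloc.apply_one_eq_apply_zero_of_homotopyRel_const
    (ρ := (Path.segment a b : C(I, E))) (fun s => rfl) H fun t =>
      hinv.exists_lift_of_lipschitzWith hf (γ := H.curry t) (hK.lineMap_left (f a) t.2)
        (by simpa [φ] using (H.eq_fst t (.inl rfl)).symm)
  simpa using hloop.symm

end HasBoundedInverseFDeriv

theorem stmt17 (n : ℕ) (f : EuclideanSpace ℝ (Fin n) → EuclideanSpace ℝ (Fin n))
    (hf : ContDiff ℝ 1 f) (A : ℝ)
    (hinv : ∀ x : EuclideanSpace ℝ (Fin n),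
      ∃ g : EuclideanSpace ℝ (Fin n) ≃L[ℝ] EuclideanSpace ℝ (Fin n),
        (g : EuclideanSpace ℝ (Fin n) →L[ℝ] EuclideanSpace ℝ (Fin n)) = fderiv ℝ f x ∧
          ‖(g.symm : EuclideanSpace ℝ (Fin n) →L[ℝ] EuclideanSpace ℝ (Fin n))‖ ≤ A) :
    Function.Injective f :=
  HasBoundedInverseFDeriv.injective hinv hf
end

section
/- Let f : ℝⁿ → ℝⁿ be a local homeomorphism that is a proper map (preimages of compact sets are compact). Then f is a homeomorphism of ℝⁿ onto ℝⁿ. -/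
/-!
A proper local homeomorphism `f : E → X` out of a Hausdorff space is a closed map with compact
discrete, hence finite, fibres, so it is a covering map. Its image is open and closed, hence all
of `X` when `X` is connected. If `e₀` and `e₁` lie in the same fibre, a path from `e₀` to `e₁`
projects to a loop whose monodromy sends `e₀` to `e₁`. When `X` is simply connected this loop is
homotopic to the constant loop, whose monodromy fixes `e₀`; so `e₁ = e₀`. Thus `f` is a continuous
closed bijection.
-/

open Function Set

variable {E X : Type*} [TopologicalSpace E] [TopologicalSpace X] {f : E → X}

theorem IsLocalHomeomorph.finite_preimage_singleton_of_isProperMap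
    (hloc : IsLocalHomeomorph f) (hproper : IsProperMap f) (x : X) : (f ⁻¹' {x}).Finite :=
  (hproper.isCompact_preimage isCompact_singleton).finite <|
    hloc.isLocalHomeomorphOn.isDiscrete_of_image
      (subsingleton_singleton.anti (image_preimage_subset f {x})).isDiscrete

theorem IsLocalHomeomorph.isCoveringMap_of_isProperMap [T2Space E]
    (hloc : IsLocalHomeomorph f) (hproper : IsProperMap f) : IsCoveringMap f :=
  isCoveringMap_iff_isCoveringMapOn_univ.mpr <|
    hproper.isClosedMap.isCoveringMapOn_of_isLocalHomeomorphOn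
      (fun x _ ↦ hloc.finite_preimage_singleton_of_isProperMap hproper x)
      hloc.isLocalHomeomorphOn

theorem IsOpenMap.surjective_of_isClosedMap [Nonempty E] [PreconnectedSpace X]
    (hopen : IsOpenMap f) (hclosed : IsClosedMap f) : Surjective f :=
  range_eq_univ.mp <|
    IsClopen.eq_univ ⟨hclosed.isClosed_range, hopen.isOpen_range⟩ (range_nonempty f)

theorem IsCoveringMap.injective_of_simplyConnectedSpace
    [PathConnectedSpace E] [SimplyConnectedSpace X]
    (cov : IsCoveringMap f) : Injective f := by
  intro e₀ e₁ h
  have hmono := cov.monodromy_eq_of_map_eq (γ := .refl (f e₀)) (ex := ⟨e₀, rfl⟩)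
    (ey := ⟨e₁, h.symm⟩) (.mk (PathConnectedSpace.somePath e₀ e₁)) (Subsingleton.elim _ _)
  rw [cov.monodromy_refl] at hmono
  exact congrArg Subtype.val hmono

theorem stmt19 (n : ℕ) (f : EuclideanSpace ℝ (Fin n) → EuclideanSpace ℝ (Fin n))
    (hloc : IsLocalHomeomorph f) (hproper : IsProperMap f) :
    IsHomeomorph f :=
  isHomeomorph_iff_continuous_isClosedMap_bijective.mpr
    ⟨hloc.continuous, hproper.isClosedMap,
      (hloc.isCoveringMap_of_isProperMap hproper).injective_of_simplyConnectedSpace,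
      hloc.isOpenMap.surjective_of_isClosedMap hproper.isClosedMap⟩
end
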